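/- arXiv:2206.11235 — 2 statements merged into one kernel-verified Lean document; each statement's English description precedes it below -/
import Mathlib

section
/- If u : ℝ × ℝ → ℝ is infinitely differentiable, u(·,t) is supported in a fixed compact set for all t, and u satisfies the sixth-order homogenized equation N₂ ∂ₓ⁶u − N₁ ∂ₓ⁴u + N₀ ∂ₓ²u + D₃ ∂ₓ⁶∂ₜ²u − D₂ ∂ₓ⁴∂ₜ²u + D₁ ∂ₓ²∂ₜ²u − D₀ ∂ₜ²u = 0 everywhere, then the energy E(t) = (1/2) ∫_ℝ ( N₂ |∂ₓ³u|² + N₁ |∂ₓ²u|² + N₀ |∂ₓu|² + D₃ |∂ₜ∂ₓ³u|² + D₂ |∂ₜ∂ₓ²u|² + D₁ |∂ₜ∂ₓu|² + D₀ |∂ₜu|² ) dx is constant in t. -/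
open MeasureTheory Filter

/-- Partial derivative in the first (space) variable. -/
noncomputable def pdx (u : ℝ → ℝ → ℝ) : ℝ → ℝ → ℝ := fun x t => deriv (fun y => u y t) x

/-- Partial derivative in the second (time) variable. -/
noncomputable def pdt (u : ℝ → ℝ → ℝ) : ℝ → ℝ → ℝ := fun x t => deriv (fun s => u x s) t

section helpers

variable {u : ℝ → ℝ → ℝ}

/-- The map y ↦ (y, t) as hasFDerivAt with derivative inl. -/
lemma hasFDerivAt_slice_x (hu : ContDiff ℝ (⊤ : ℕ∞) (Function.uncurry u)) (x t : ℝ) :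
    HasDerivAt (fun y => u y t) (fderiv ℝ (Function.uncurry u) (x, t) (1, 0)) x := by
  have h1 : HasFDerivAt (fun y : ℝ => (y, t)) ((ContinuousLinearMap.inl ℝ ℝ ℝ)) x := by
    apply HasFDerivAt.prodMk (hasFDerivAt_id x) (hasFDerivAt_const t x)
  have h2 : HasFDerivAt (Function.uncurry u) (fderiv ℝ (Function.uncurry u) (x, t)) (x, t) :=
    (hu.differentiable (by simp) (x, t)).hasFDerivAt
  have := h2.comp x h1
  have := this.hasDerivAt
  simpa [Function.comp_def] using this

lemma hasFDerivAt_slice_t (hu : ContDiff ℝ (⊤ : ℕ∞) (Function.uncurry u)) (x t : ℝ) :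
    HasDerivAt (fun s => u x s) (fderiv ℝ (Function.uncurry u) (x, t) (0, 1)) t := by
  have h1 : HasFDerivAt (fun s : ℝ => (x, s)) ((ContinuousLinearMap.inr ℝ ℝ ℝ)) t := by
    apply HasFDerivAt.prodMk (hasFDerivAt_const x t) (hasFDerivAt_id t)
  have h2 : HasFDerivAt (Function.uncurry u) (fderiv ℝ (Function.uncurry u) (x, t)) (x, t) :=
    (hu.differentiable (by simp) (x, t)).hasFDerivAt
  have := (h2.comp t h1).hasDerivAt
  simpa [Function.comp_def] using this

lemma pdx_eq (hu : ContDiff ℝ (⊤ : ℕ∞) (Function.uncurry u)) (x t : ℝ) :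
    pdx u x t = fderiv ℝ (Function.uncurry u) (x, t) (1, 0) :=
  (hasFDerivAt_slice_x hu x t).deriv

lemma pdt_eq (hu : ContDiff ℝ (⊤ : ℕ∞) (Function.uncurry u)) (x t : ℝ) :
    pdt u x t = fderiv ℝ (Function.uncurry u) (x, t) (0, 1) :=
  (hasFDerivAt_slice_t hu x t).deriv

lemma contDiff_pdx (hu : ContDiff ℝ (⊤ : ℕ∞) (Function.uncurry u)) :
    ContDiff ℝ (⊤ : ℕ∞) (Function.uncurry (pdx u)) := by
  have h : Function.uncurry (pdx u) = fun p : ℝ × ℝ => fderiv ℝ (Function.uncurry u) p (1, 0) := by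
    funext p
    exact pdx_eq hu p.1 p.2
  rw [h]
  exact (hu.fderiv_right (by simp)).clm_apply contDiff_const

lemma contDiff_pdt (hu : ContDiff ℝ (⊤ : ℕ∞) (Function.uncurry u)) :
    ContDiff ℝ (⊤ : ℕ∞) (Function.uncurry (pdt u)) := by
  have h : Function.uncurry (pdt u) = fun p : ℝ × ℝ => fderiv ℝ (Function.uncurry u) p (0, 1) := by
    funext p
    exact pdt_eq hu p.1 p.2
  rw [h]
  exact (hu.fderiv_right (by simp)).clm_apply contDiff_const

end helpers

section swap
variable {u : ℝ → ℝ → ℝ}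

lemma pdt_pdx_swap (hu : ContDiff ℝ (⊤ : ℕ∞) (Function.uncurry u)) :
    pdt (pdx u) = pdx (pdt u) := by
  funext x t
  set U := Function.uncurry u with hU
  have hf' : ContDiff ℝ (⊤ : ℕ∞) (fderiv ℝ U) := hu.fderiv_right (by simp)
  have hux : Function.uncurry (pdx u) = fun p : ℝ × ℝ => fderiv ℝ U p (1, 0) := by
    funext p; exact pdx_eq hu p.1 p.2
  have hut : Function.uncurry (pdt u) = fun p : ℝ × ℝ => fderiv ℝ U p (0, 1) := by
    funext p; exact pdt_eq hu p.1 p.2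
  have key : ∀ v w : ℝ × ℝ, fderiv ℝ (fun p : ℝ × ℝ => fderiv ℝ U p v) (x, t) w
      = fderiv ℝ (fderiv ℝ U) (x, t) w v := by
    intro v w
    have h1 : DifferentiableAt ℝ (fderiv ℝ U) (x, t) := hf'.differentiable (by simp) _
    rw [fderiv_clm_apply h1 (differentiableAt_const v)]
    simp
  have hsymm : fderiv ℝ (fderiv ℝ U) (x, t) (0, 1) (1, 0)
      = fderiv ℝ (fderiv ℝ U) (x, t) (1, 0) (0, 1) := by
    apply second_derivative_symmetric (f := U) (f' := fderiv ℝ U)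
    · intro y; exact (hu.differentiable (by simp) y).hasFDerivAt
    · exact ((hf'.differentiable (by simp)) (x, t)).hasFDerivAt
  have e1 : pdt (pdx u) x t = fderiv ℝ (fderiv ℝ U) (x, t) (0, 1) (1, 0) := by
    rw [pdt_eq (contDiff_pdx hu) x t, hux, key]
  have e2 : pdx (pdt u) x t = fderiv ℝ (fderiv ℝ U) (x, t) (1, 0) (0, 1) := by
    rw [pdx_eq (contDiff_pdt hu) x t, hut, key]
  rw [e1, e2, hsymm]

end swap

section iter
variable {u : ℝ → ℝ → ℝ}

lemma hasDerivAt_pdt (hu : ContDiff ℝ (⊤ : ℕ∞) (Function.uncurry u)) (x t : ℝ) :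
    HasDerivAt (fun s => u x s) (pdt u x t) t := by
  rw [pdt_eq hu]; exact hasFDerivAt_slice_t hu x t

lemma hasDerivAt_pdx (hu : ContDiff ℝ (⊤ : ℕ∞) (Function.uncurry u)) (x t : ℝ) :
    HasDerivAt (fun y => u y t) (pdx u x t) x := by
  rw [pdx_eq hu]; exact hasFDerivAt_slice_x hu x t

lemma contDiff_pdx_iter (hu : ContDiff ℝ (⊤ : ℕ∞) (Function.uncurry u)) (k : ℕ) :
    ContDiff ℝ (⊤ : ℕ∞) (Function.uncurry (pdx^[k] u)) := by
  induction k generalizing u with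
  | zero => simpa using hu
  | succ n ih =>
    rw [Function.iterate_succ_apply]
    exact ih (contDiff_pdx hu)

lemma pdt_pdx_iter_swap (hu : ContDiff ℝ (⊤ : ℕ∞) (Function.uncurry u)) (k : ℕ) :
    pdt (pdx^[k] u) = pdx^[k] (pdt u) := by
  induction k generalizing u with
  | zero => simp
  | succ n ih =>
    rw [Function.iterate_succ_apply, ih (contDiff_pdx hu), pdt_pdx_swap hu,
      ← Function.iterate_succ_apply]

lemma supp_pdx {K : Set ℝ} (hKc : IsClosed K) (hs : ∀ t x : ℝ, x ∉ K → u x t = 0) :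
    ∀ t x : ℝ, x ∉ K → pdx u x t = 0 := by
  intro t x hx
  have hev : (fun y => u y t) =ᶠ[nhds x] (fun _ => (0 : ℝ)) := by
    have : Kᶜ ∈ nhds x := hKc.isOpen_compl.mem_nhds hx
    filter_upwards [this] with y hy
    exact hs t y hy
  show deriv (fun y => u y t) x = 0
  rw [hev.deriv_eq]
  simp

lemma supp_pdt {K : Set ℝ} (hs : ∀ t x : ℝ, x ∉ K → u x t = 0) :
    ∀ t x : ℝ, x ∉ K → pdt u x t = 0 := by
  intro t x hx
  show deriv (fun s => u x s) t = 0
  have : (fun s => u x s) = fun _ => (0 : ℝ) := by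
    funext s; exact hs s x hx
  rw [this]
  simp

lemma supp_pdx_iter {K : Set ℝ} (hKc : IsClosed K) (hs : ∀ t x : ℝ, x ∉ K → u x t = 0) (k : ℕ) :
    ∀ t x : ℝ, x ∉ K → pdx^[k] u x t = 0 := by
  induction k generalizing u with
  | zero => simpa using hs
  | succ n ih =>
    rw [Function.iterate_succ_apply]
    exact ih (supp_pdx hKc hs)

end iter

section intzero

lemma integral_deriv_zero_of_supp {f : ℝ → ℝ} (hf : ContDiff ℝ (⊤ : ℕ∞) f) {K : Set ℝ}
    (hK : IsCompact K) (hs : ∀ x, x ∉ K → f x = 0) : ∫ x : ℝ, deriv f x = 0 := by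
  obtain ⟨R, hR⟩ := hK.isBounded.subset_closedBall 0
  set R' := |R| + 1 with hR'
  have hKR : K ⊆ Set.Ioc (-R') R' := by
    intro x hx
    have := hR hx
    rw [Metric.mem_closedBall, Real.dist_eq, sub_zero] at this
    have h1 : |x| ≤ |R| := le_trans this (le_abs_self R)
    rw [abs_le] at h1
    constructor <;> [linarith; linarith]
  have hderiv0 : ∀ x, x ∉ K → deriv f x = 0 := by
    intro x hx
    have hev : f =ᶠ[nhds x] (fun _ => (0 : ℝ)) := by
      filter_upwards [hK.isClosed.isOpen_compl.mem_nhds hx] with y hy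
      exact hs y hy
    rw [hev.deriv_eq]; simp
  have hind : deriv f = (Set.Ioc (-R') R').indicator (deriv f) := by
    funext x
    by_cases hx : x ∈ Set.Ioc (-R') R'
    · rw [Set.indicator_of_mem hx]
    · rw [Set.indicator_of_notMem hx]
      exact hderiv0 x (fun h => hx (hKR h))
  rw [hind, MeasureTheory.integral_indicator measurableSet_Ioc,
    ← intervalIntegral.integral_of_le (by have := abs_nonneg R; simp only [hR']; linarith : (-R') ≤ R')]
  rw [intervalIntegral.integral_deriv_eq_sub
    (fun x _ => (hf.differentiable (by simp)).differentiableAt)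
    ((hf.continuous_deriv (by simp)).intervalIntegrable _ _)]
  have hb : ∀ y : ℝ, |R| < |y| → f y = 0 := by
    intro y hy
    refine hs y (fun h => ?_)
    have := hR h
    rw [Metric.mem_closedBall, Real.dist_eq, sub_zero] at this
    have : |y| ≤ |R| := le_trans this (le_abs_self R)
    linarith
  rw [hb R' (by rw [hR', abs_of_nonneg (add_nonneg (abs_nonneg R) zero_le_one)]; linarith),
    hb (-R') (by rw [hR', abs_neg, abs_of_nonneg (add_nonneg (abs_nonneg R) zero_le_one)]; linarith)]
  ring

end intzero

section atoms
variable {g : ℝ → ℝ → ℝ}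

lemma hasDerivAt_pdt_iter (hg : ContDiff ℝ (⊤ : ℕ∞) (Function.uncurry g)) (k : ℕ) (x t : ℝ) :
    HasDerivAt (fun s => pdx^[k] g x s) (pdx^[k] (pdt g) x t) t := by
  have := hasDerivAt_pdt (contDiff_pdx_iter hg k) x t
  rwa [pdt_pdx_iter_swap hg k] at this

lemma hasDerivAt_pdx_iter (hg : ContDiff ℝ (⊤ : ℕ∞) (Function.uncurry g)) (k : ℕ) (x t : ℝ) :
    HasDerivAt (fun y => pdx^[k] g y t) (pdx^[k + 1] g x t) x := by
  have := hasDerivAt_pdx (contDiff_pdx_iter hg k) x t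
  rwa [← Function.iterate_succ_apply' pdx k g] at this

end atoms

section abstract

open Metric in
lemma const_of_energy {Fi Fi' : ℝ → ℝ → ℝ} {K : Set ℝ} (hK : IsCompact K)
    (h1 : ∀ t, Continuous (Fi t))
    (h2 : Continuous fun p : ℝ × ℝ => Fi' p.2 p.1)
    (hFs : ∀ t x, x ∉ K → Fi t x = 0)
    (hdiff : ∀ t x : ℝ, HasDerivAt (fun s => Fi s x) (Fi' t x) t)
    (hzero : ∀ t : ℝ, (∫ x : ℝ, Fi' t x) = 0) :
    ∀ t₁ t₂ : ℝ, ((1:ℝ)/2) * (∫ x : ℝ, Fi t₁ x) = ((1:ℝ)/2) * (∫ x : ℝ, Fi t₂ x) := by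
  have key : ∀ t₀ : ℝ, HasDerivAt (fun t => ∫ x : ℝ, Fi t x) 0 t₀ := by
    intro t₀
    obtain ⟨C, hC⟩ := (hK.prod (isCompact_closedBall t₀ 1)).exists_bound_of_continuousOn
      h2.continuousOn
    have H := hasDerivAt_integral_of_dominated_loc_of_deriv_le
      (F := fun t x => Fi t x) (F' := fun t x => Fi' t x)
      (bound := K.indicator fun _ => C) (μ := MeasureTheory.volume) (x₀ := t₀)
      (ball_mem_nhds t₀ one_pos)
      (Eventually.of_forall fun t => (h1 t).aestronglyMeasurable)
      ((h1 t₀).integrable_of_hasCompactSupport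
        (HasCompactSupport.intro hK fun x hx => hFs t₀ x hx))
      ((h2.comp (continuous_id.prodMk continuous_const)).aestronglyMeasurable)
      (Eventually.of_forall ?_)
      ?_
      (Eventually.of_forall fun x t _ => hdiff t x)
    · have := H.2
      rwa [hzero t₀] at this
    · intro x t ht
      by_cases hx : x ∈ K
      · rw [Set.indicator_of_mem hx]
        exact hC (x, t) ⟨hx, ball_subset_closedBall ht⟩
      · rw [Set.indicator_of_notMem hx]
        have hd0 : ∀ s : ℝ, Fi s x = 0 := fun s => hFs s x hx
        have : Fi' t x = 0 := by
          have h := hdiff t x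
          have h0 : HasDerivAt (fun s => Fi s x) 0 t := by
            have : (fun s => Fi s x) = fun _ => (0:ℝ) := funext hd0
            rw [this]; exact hasDerivAt_const t 0
          exact h.unique h0
        simp [this]
    · rw [MeasureTheory.integrable_indicator_iff hK.isClosed.measurableSet]
      exact MeasureTheory.integrableOn_const hK.measure_lt_top.ne
  intro t₁ t₂
  have key2 : ∀ t₀ : ℝ, HasDerivAt (fun t => ((1:ℝ)/2) * ∫ x : ℝ, Fi t x) 0 t₀ := by
    intro t₀
    have := (key t₀).const_mul ((1:ℝ)/2)
    simpa using this
  exact is_const_of_deriv_eq_zero (fun t => (key2 t).differentiableAt)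
    (fun t => (key2 t).deriv) t₁ t₂

end abstract

section slice
variable {g : ℝ → ℝ → ℝ}

lemma contDiff_slice_x (hg : ContDiff ℝ (⊤ : ℕ∞) (Function.uncurry g)) (k : ℕ) (t : ℝ) :
    ContDiff ℝ (⊤ : ℕ∞) (fun y => pdx^[k] g y t) :=
  (contDiff_pdx_iter hg k).comp (contDiff_id.prodMk contDiff_const)

end slice

/-- Energy conservation for the sixth-order homogenized equation: if `u` is smooth, spatially
supported in a fixed compact set, and satisfies the equation, then the energy
`E(t)` is constant in `t`. -/
theorem stmt_1 (N0 N1 N2 D0 D1 D2 D3 : ℝ) (u : ℝ → ℝ → ℝ)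
    (hu : ContDiff ℝ (⊤ : ℕ∞) (Function.uncurry u))
    (K : Set ℝ) (hK : IsCompact K)
    (hsupp : ∀ t x : ℝ, x ∉ K → u x t = 0)
    (hpde : ∀ x t : ℝ,
      N2 * pdx^[6] u x t - N1 * pdx^[4] u x t + N0 * pdx^[2] u x t
        + D3 * pdx^[6] (pdt^[2] u) x t - D2 * pdx^[4] (pdt^[2] u) x t
        + D1 * pdx^[2] (pdt^[2] u) x t - D0 * pdt^[2] u x t = 0)
    (E : ℝ → ℝ)
    (hE : E = fun t => (1/2) * ∫ x : ℝ,
      (N2 * (pdx^[3] u x t) ^ 2 + N1 * (pdx^[2] u x t) ^ 2 + N0 * (pdx u x t) ^ 2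
        + D3 * (pdt (pdx^[3] u) x t) ^ 2 + D2 * (pdt (pdx^[2] u) x t) ^ 2
        + D1 * (pdt (pdx u) x t) ^ 2 + D0 * (pdt u x t) ^ 2)) :
    ∀ t₁ t₂ : ℝ, E t₁ = E t₂ := by
  have hv : ContDiff ℝ (⊤ : ℕ∞) (Function.uncurry (pdt u)) := contDiff_pdt hu
  have hw : ContDiff ℝ (⊤ : ℕ∞) (Function.uncurry (pdt (pdt u))) := contDiff_pdt hv
  have hpde' : ∀ x t : ℝ,
      N2 * pdx^[6] u x t - N1 * pdx^[4] u x t + N0 * pdx^[2] u x t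
        + D3 * pdx^[6] (pdt (pdt u)) x t - D2 * pdx^[4] (pdt (pdt u)) x t
        + D1 * pdx^[2] (pdt (pdt u)) x t - D0 * pdt (pdt u) x t = 0 := hpde
  have hsv : ∀ t x : ℝ, x ∉ K → pdt u x t = 0 := supp_pdt hsupp
  have hsw : ∀ t x : ℝ, x ∉ K → pdt (pdt u) x t = 0 := supp_pdt hsv
  -- the integrand rewritten with swapped mixed partials
  have hEF : E = fun t => (1/2) * ∫ x : ℝ,
      (N2 * (pdx^[3] u x t) ^ 2 + N1 * (pdx^[2] u x t) ^ 2 + N0 * (pdx u x t) ^ 2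
        + D3 * (pdx^[3] (pdt u) x t) ^ 2 + D2 * (pdx^[2] (pdt u) x t) ^ 2
        + D1 * (pdx (pdt u) x t) ^ 2 + D0 * (pdt u x t) ^ 2) := by
    rw [hE]
    simp only [pdt_pdx_iter_swap hu 3, pdt_pdx_iter_swap hu 2, pdt_pdx_swap hu]
  -- time derivative of the integrand
  have hdt : ∀ t x : ℝ, HasDerivAt
      (fun s => N2 * (pdx^[3] u x s) ^ 2 + N1 * (pdx^[2] u x s) ^ 2 + N0 * (pdx u x s) ^ 2
        + D3 * (pdx^[3] (pdt u) x s) ^ 2 + D2 * (pdx^[2] (pdt u) x s) ^ 2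
        + D1 * (pdx (pdt u) x s) ^ 2 + D0 * (pdt u x s) ^ 2)
      (2 * (N2 * pdx^[3] u x t * pdx^[3] (pdt u) x t
        + N1 * pdx^[2] u x t * pdx^[2] (pdt u) x t
        + N0 * pdx u x t * pdx (pdt u) x t
        + D3 * pdx^[3] (pdt u) x t * pdx^[3] (pdt (pdt u)) x t
        + D2 * pdx^[2] (pdt u) x t * pdx^[2] (pdt (pdt u)) x t
        + D1 * pdx (pdt u) x t * pdx (pdt (pdt u)) x t
        + D0 * pdt u x t * pdt (pdt u) x t)) t := by
    intro t x
    have h3 := hasDerivAt_pdt_iter hu 3 x t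
    have h2 := hasDerivAt_pdt_iter hu 2 x t
    have h1 : HasDerivAt (fun s => pdx u x s) (pdx (pdt u) x t) t := hasDerivAt_pdt_iter hu 1 x t
    have g3 : HasDerivAt (fun s => pdx^[3] (pdt u) x s) (pdx^[3] (pdt (pdt u)) x t) t :=
      hasDerivAt_pdt_iter hv 3 x t
    have g2 : HasDerivAt (fun s => pdx^[2] (pdt u) x s) (pdx^[2] (pdt (pdt u)) x t) t :=
      hasDerivAt_pdt_iter hv 2 x t
    have g1 : HasDerivAt (fun s => pdx (pdt u) x s) (pdx (pdt (pdt u)) x t) t :=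
      hasDerivAt_pdt_iter hv 1 x t
    have g0 : HasDerivAt (fun s => pdt u x s) (pdt (pdt u) x t) t := hasDerivAt_pdt hv x t
    have H := (((((((h3.pow 2).const_mul N2).add ((h2.pow 2).const_mul N1)).add
      ((h1.pow 2).const_mul N0)).add ((g3.pow 2).const_mul D3)).add
      ((g2.pow 2).const_mul D2)).add ((g1.pow 2).const_mul D1)).add ((g0.pow 2).const_mul D0)
    exact H.congr_deriv (by ring)
  -- the flux: the time derivative of the integrand is a spatial divergence
  have hdx : ∀ t x : ℝ, HasDerivAt
      (fun y => 2 * (N2 * (pdx^[3] u y t * pdx^[2] (pdt u) y t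
          - pdx^[4] u y t * pdx (pdt u) y t + pdx^[5] u y t * pdt u y t)
        + N1 * (pdx^[2] u y t * pdx (pdt u) y t - pdx^[3] u y t * pdt u y t)
        + N0 * (pdx u y t * pdt u y t)
        + D3 * (pdx^[2] (pdt u) y t * pdx^[3] (pdt (pdt u)) y t
          - pdx (pdt u) y t * pdx^[4] (pdt (pdt u)) y t
          + pdt u y t * pdx^[5] (pdt (pdt u)) y t)
        + D2 * (pdx (pdt u) y t * pdx^[2] (pdt (pdt u)) y t
          - pdt u y t * pdx^[3] (pdt (pdt u)) y t)
        + D1 * (pdt u y t * pdx (pdt (pdt u)) y t)))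
      (2 * (N2 * pdx^[3] u x t * pdx^[3] (pdt u) x t
        + N1 * pdx^[2] u x t * pdx^[2] (pdt u) x t
        + N0 * pdx u x t * pdx (pdt u) x t
        + D3 * pdx^[3] (pdt u) x t * pdx^[3] (pdt (pdt u)) x t
        + D2 * pdx^[2] (pdt u) x t * pdx^[2] (pdt (pdt u)) x t
        + D1 * pdx (pdt u) x t * pdx (pdt (pdt u)) x t
        + D0 * pdt u x t * pdt (pdt u) x t)) x := by
    intro t x
    have ua1 : HasDerivAt (fun y => pdx u y t) (pdx^[2] u x t) x := hasDerivAt_pdx_iter hu 1 x t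
    have ua2 : HasDerivAt (fun y => pdx^[2] u y t) (pdx^[3] u x t) x := hasDerivAt_pdx_iter hu 2 x t
    have ua3 : HasDerivAt (fun y => pdx^[3] u y t) (pdx^[4] u x t) x := hasDerivAt_pdx_iter hu 3 x t
    have ua4 : HasDerivAt (fun y => pdx^[4] u y t) (pdx^[5] u x t) x := hasDerivAt_pdx_iter hu 4 x t
    have ua5 : HasDerivAt (fun y => pdx^[5] u y t) (pdx^[6] u x t) x := hasDerivAt_pdx_iter hu 5 x t
    have va0 : HasDerivAt (fun y => pdt u y t) (pdx (pdt u) x t) x := hasDerivAt_pdx_iter hv 0 x t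
    have va1 : HasDerivAt (fun y => pdx (pdt u) y t) (pdx^[2] (pdt u) x t) x :=
      hasDerivAt_pdx_iter hv 1 x t
    have va2 : HasDerivAt (fun y => pdx^[2] (pdt u) y t) (pdx^[3] (pdt u) x t) x :=
      hasDerivAt_pdx_iter hv 2 x t
    have wa1 : HasDerivAt (fun y => pdx (pdt (pdt u)) y t) (pdx^[2] (pdt (pdt u)) x t) x :=
      hasDerivAt_pdx_iter hw 1 x t
    have wa2 : HasDerivAt (fun y => pdx^[2] (pdt (pdt u)) y t) (pdx^[3] (pdt (pdt u)) x t) x :=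
      hasDerivAt_pdx_iter hw 2 x t
    have wa3 : HasDerivAt (fun y => pdx^[3] (pdt (pdt u)) y t) (pdx^[4] (pdt (pdt u)) x t) x :=
      hasDerivAt_pdx_iter hw 3 x t
    have wa4 : HasDerivAt (fun y => pdx^[4] (pdt (pdt u)) y t) (pdx^[5] (pdt (pdt u)) x t) x :=
      hasDerivAt_pdx_iter hw 4 x t
    have wa5 : HasDerivAt (fun y => pdx^[5] (pdt (pdt u)) y t) (pdx^[6] (pdt (pdt u)) x t) x :=
      hasDerivAt_pdx_iter hw 5 x t
    have H := ((((((((ua3.mul va2).sub (ua4.mul va1)).add (ua5.mul va0)).const_mul N2).add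
      (((ua2.mul va1).sub (ua3.mul va0)).const_mul N1)).add
      ((ua1.mul va0).const_mul N0)).add
      ((((va2.mul wa3).sub (va1.mul wa4)).add (va0.mul wa5)).const_mul D3)).add
      (((va1.mul wa2).sub (va0.mul wa3)).const_mul D2)).add
      ((va0.mul wa1).const_mul D1)
    have H2 := H.const_mul (2 : ℝ)
    exact H2.congr_deriv (by linear_combination (2 * pdt u x t) * hpde' x t)
  -- the spatial integral of the time derivative vanishes
  have hzero : ∀ t : ℝ, (∫ x : ℝ,
      2 * (N2 * pdx^[3] u x t * pdx^[3] (pdt u) x t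
        + N1 * pdx^[2] u x t * pdx^[2] (pdt u) x t
        + N0 * pdx u x t * pdx (pdt u) x t
        + D3 * pdx^[3] (pdt u) x t * pdx^[3] (pdt (pdt u)) x t
        + D2 * pdx^[2] (pdt u) x t * pdx^[2] (pdt (pdt u)) x t
        + D1 * pdx (pdt u) x t * pdx (pdt (pdt u)) x t
        + D0 * pdt u x t * pdt (pdt u) x t)) = 0 := by
    intro t
    have hGsm : ContDiff ℝ (⊤ : ℕ∞) (fun y => 2 * (N2 * (pdx^[3] u y t * pdx^[2] (pdt u) y t
          - pdx^[4] u y t * pdx (pdt u) y t + pdx^[5] u y t * pdt u y t)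
        + N1 * (pdx^[2] u y t * pdx (pdt u) y t - pdx^[3] u y t * pdt u y t)
        + N0 * (pdx u y t * pdt u y t)
        + D3 * (pdx^[2] (pdt u) y t * pdx^[3] (pdt (pdt u)) y t
          - pdx (pdt u) y t * pdx^[4] (pdt (pdt u)) y t
          + pdt u y t * pdx^[5] (pdt (pdt u)) y t)
        + D2 * (pdx (pdt u) y t * pdx^[2] (pdt (pdt u)) y t
          - pdt u y t * pdx^[3] (pdt (pdt u)) y t)
        + D1 * (pdt u y t * pdx (pdt (pdt u)) y t))) := by
      exact contDiff_const.mul ((((((contDiff_const.mul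
        ((((contDiff_slice_x hu 3 t).mul (contDiff_slice_x hv 2 t)).sub
          ((contDiff_slice_x hu 4 t).mul (contDiff_slice_x hv 1 t))).add
          ((contDiff_slice_x hu 5 t).mul (contDiff_slice_x hv 0 t)))).add
        (contDiff_const.mul (((contDiff_slice_x hu 2 t).mul (contDiff_slice_x hv 1 t)).sub
          ((contDiff_slice_x hu 3 t).mul (contDiff_slice_x hv 0 t))))).add
        (contDiff_const.mul ((contDiff_slice_x hu 1 t).mul (contDiff_slice_x hv 0 t)))).add
        (contDiff_const.mul ((((contDiff_slice_x hv 2 t).mul (contDiff_slice_x hw 3 t)).sub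
          ((contDiff_slice_x hv 1 t).mul (contDiff_slice_x hw 4 t))).add
          ((contDiff_slice_x hv 0 t).mul (contDiff_slice_x hw 5 t))))).add
        (contDiff_const.mul (((contDiff_slice_x hv 1 t).mul (contDiff_slice_x hw 2 t)).sub
          ((contDiff_slice_x hv 0 t).mul (contDiff_slice_x hw 3 t))))).add
        (contDiff_const.mul ((contDiff_slice_x hv 0 t).mul (contDiff_slice_x hw 1 t))))
    have hGsupp : ∀ y : ℝ, y ∉ K → 2 * (N2 * (pdx^[3] u y t * pdx^[2] (pdt u) y t
          - pdx^[4] u y t * pdx (pdt u) y t + pdx^[5] u y t * pdt u y t)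
        + N1 * (pdx^[2] u y t * pdx (pdt u) y t - pdx^[3] u y t * pdt u y t)
        + N0 * (pdx u y t * pdt u y t)
        + D3 * (pdx^[2] (pdt u) y t * pdx^[3] (pdt (pdt u)) y t
          - pdx (pdt u) y t * pdx^[4] (pdt (pdt u)) y t
          + pdt u y t * pdx^[5] (pdt (pdt u)) y t)
        + D2 * (pdx (pdt u) y t * pdx^[2] (pdt (pdt u)) y t
          - pdt u y t * pdx^[3] (pdt (pdt u)) y t)
        + D1 * (pdt u y t * pdx (pdt (pdt u)) y t)) = 0 := by
      intro y hy
      rw [hsv t y hy, supp_pdx hK.isClosed hsupp t y hy, supp_pdx hK.isClosed hsv t y hy,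
        supp_pdx_iter hK.isClosed hsupp 2 t y hy, supp_pdx_iter hK.isClosed hsupp 3 t y hy,
        supp_pdx_iter hK.isClosed hsupp 4 t y hy, supp_pdx_iter hK.isClosed hsupp 5 t y hy,
        supp_pdx_iter hK.isClosed hsv 2 t y hy]
      ring
    have hder : (fun x : ℝ => 2 * (N2 * pdx^[3] u x t * pdx^[3] (pdt u) x t
        + N1 * pdx^[2] u x t * pdx^[2] (pdt u) x t
        + N0 * pdx u x t * pdx (pdt u) x t
        + D3 * pdx^[3] (pdt u) x t * pdx^[3] (pdt (pdt u)) x t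
        + D2 * pdx^[2] (pdt u) x t * pdx^[2] (pdt (pdt u)) x t
        + D1 * pdx (pdt u) x t * pdx (pdt (pdt u)) x t
        + D0 * pdt u x t * pdt (pdt u) x t))
        = fun x => deriv (fun y => 2 * (N2 * (pdx^[3] u y t * pdx^[2] (pdt u) y t
          - pdx^[4] u y t * pdx (pdt u) y t + pdx^[5] u y t * pdt u y t)
        + N1 * (pdx^[2] u y t * pdx (pdt u) y t - pdx^[3] u y t * pdt u y t)
        + N0 * (pdx u y t * pdt u y t)
        + D3 * (pdx^[2] (pdt u) y t * pdx^[3] (pdt (pdt u)) y t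
          - pdx (pdt u) y t * pdx^[4] (pdt (pdt u)) y t
          + pdt u y t * pdx^[5] (pdt (pdt u)) y t)
        + D2 * (pdx (pdt u) y t * pdx^[2] (pdt (pdt u)) y t
          - pdt u y t * pdx^[3] (pdt (pdt u)) y t)
        + D1 * (pdt u y t * pdx (pdt (pdt u)) y t))) x := by
      funext x
      exact ((hdx t x).deriv).symm
    rw [hder]
    exact integral_deriv_zero_of_supp hGsm hK hGsupp
  -- continuity of the integrand and its time derivative
  have h1 : ∀ t : ℝ, Continuous (fun x : ℝ =>
      N2 * (pdx^[3] u x t) ^ 2 + N1 * (pdx^[2] u x t) ^ 2 + N0 * (pdx u x t) ^ 2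
        + D3 * (pdx^[3] (pdt u) x t) ^ 2 + D2 * (pdx^[2] (pdt u) x t) ^ 2
        + D1 * (pdx (pdt u) x t) ^ 2 + D0 * (pdt u x t) ^ 2) := by
    intro t
    exact ((((((continuous_const.mul ((contDiff_slice_x hu 3 t).continuous.pow 2)).add
      (continuous_const.mul ((contDiff_slice_x hu 2 t).continuous.pow 2))).add
      (continuous_const.mul ((contDiff_slice_x hu 1 t).continuous.pow 2))).add
      (continuous_const.mul ((contDiff_slice_x hv 3 t).continuous.pow 2))).add
      (continuous_const.mul ((contDiff_slice_x hv 2 t).continuous.pow 2))).add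
      (continuous_const.mul ((contDiff_slice_x hv 1 t).continuous.pow 2))).add
      (continuous_const.mul ((contDiff_slice_x hv 0 t).continuous.pow 2))
  have h2 : Continuous (fun p : ℝ × ℝ =>
      2 * (N2 * pdx^[3] u p.1 p.2 * pdx^[3] (pdt u) p.1 p.2
        + N1 * pdx^[2] u p.1 p.2 * pdx^[2] (pdt u) p.1 p.2
        + N0 * pdx u p.1 p.2 * pdx (pdt u) p.1 p.2
        + D3 * pdx^[3] (pdt u) p.1 p.2 * pdx^[3] (pdt (pdt u)) p.1 p.2
        + D2 * pdx^[2] (pdt u) p.1 p.2 * pdx^[2] (pdt (pdt u)) p.1 p.2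
        + D1 * pdx (pdt u) p.1 p.2 * pdx (pdt (pdt u)) p.1 p.2
        + D0 * pdt u p.1 p.2 * pdt (pdt u) p.1 p.2)) := by
    exact continuous_const.mul ((((((((continuous_const.mul
      (contDiff_pdx_iter hu 3).continuous).mul (contDiff_pdx_iter hv 3).continuous).add
      ((continuous_const.mul (contDiff_pdx_iter hu 2).continuous).mul
        (contDiff_pdx_iter hv 2).continuous)).add
      ((continuous_const.mul (contDiff_pdx_iter hu 1).continuous).mul
        (contDiff_pdx_iter hv 1).continuous)).add
      ((continuous_const.mul (contDiff_pdx_iter hv 3).continuous).mul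
        (contDiff_pdx_iter hw 3).continuous)).add
      ((continuous_const.mul (contDiff_pdx_iter hv 2).continuous).mul
        (contDiff_pdx_iter hw 2).continuous)).add
      ((continuous_const.mul (contDiff_pdx_iter hv 1).continuous).mul
        (contDiff_pdx_iter hw 1).continuous)).add
      ((continuous_const.mul hv.continuous).mul hw.continuous))
  -- support of the integrand
  have hFs : ∀ t x : ℝ, x ∉ K →
      N2 * (pdx^[3] u x t) ^ 2 + N1 * (pdx^[2] u x t) ^ 2 + N0 * (pdx u x t) ^ 2
        + D3 * (pdx^[3] (pdt u) x t) ^ 2 + D2 * (pdx^[2] (pdt u) x t) ^ 2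
        + D1 * (pdx (pdt u) x t) ^ 2 + D0 * (pdt u x t) ^ 2 = 0 := by
    intro t x hx
    rw [hsv t x hx, supp_pdx hK.isClosed hsupp t x hx, supp_pdx hK.isClosed hsv t x hx,
      supp_pdx_iter hK.isClosed hsupp 2 t x hx, supp_pdx_iter hK.isClosed hsupp 3 t x hx,
      supp_pdx_iter hK.isClosed hsv 2 t x hx, supp_pdx_iter hK.isClosed hsv 3 t x hx]
    ring
  rw [hEF]
  intro t₁ t₂
  exact const_of_energy (Fi := fun t x =>
      N2 * (pdx^[3] u x t) ^ 2 + N1 * (pdx^[2] u x t) ^ 2 + N0 * (pdx u x t) ^ 2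
        + D3 * (pdx^[3] (pdt u) x t) ^ 2 + D2 * (pdx^[2] (pdt u) x t) ^ 2
        + D1 * (pdx (pdt u) x t) ^ 2 + D0 * (pdt u x t) ^ 2)
    (Fi' := fun t x => 2 * (N2 * pdx^[3] u x t * pdx^[3] (pdt u) x t
        + N1 * pdx^[2] u x t * pdx^[2] (pdt u) x t
        + N0 * pdx u x t * pdx (pdt u) x t
        + D3 * pdx^[3] (pdt u) x t * pdx^[3] (pdt (pdt u)) x t
        + D2 * pdx^[2] (pdt u) x t * pdx^[2] (pdt (pdt u)) x t
        + D1 * pdx (pdt u) x t * pdx (pdt (pdt u)) x t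
        + D0 * pdt u x t * pdt (pdt u) x t))
    hK h1 h2 hFs (fun t x => hdt t x) hzero t₁ t₂
end

section
/- Let T₀ > 0, c₁, c₂ ∈ ℝ, and set C₁(y) = c₁ e^{−y²}/√π, C₂(y) = c₂ e^{−y²}/√π, K(τ) ≡ 1. The complex plane wave u(x,t) = exp(i(kx − ωt)) with ω ≠ 0 satisfies the space-time nonlocal equation ( u(x, t−T₀) − 2u(x,t) + u(x, t+T₀) ) + ∫_ℝ ∫₀^{T₀} C₁(x−x′) K(τ) [ u(x,t−τ) − 2u(x,t) + u(x,t+τ) − u(x′,t−τ) + 2u(x′,t) − u(x′,t+τ) ] dτ dx′ = ∫_ℝ C₂(x−x′) ( u(x′,t) − u(x,t) ) dx′ at every (x,t) if and only if 2( cos(ωT₀) − 1 ) + 2 c₁ (1 − e^{−k²/4}) ( sin(ωT₀)/ω − T₀ ) + c₂ (1 − e^{−k²/4}) = 0. (This uses the Gaussian Fourier identity ∫_ℝ (e^{−y²}/√π) e^{iky} dy = e^{−k²/4}.) -/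
open MeasureTheory Filter

section Helpers

theorem gaussMass' : ∫ y : ℝ, ((Real.exp (-y^2) / Real.sqrt Real.pi : ℝ) : ℂ) = 1 := by
  have h : ∫ y : ℝ, (Real.exp (-y^2) / Real.sqrt Real.pi) = 1 := by
    rw [MeasureTheory.integral_div]
    simp_rw [show ∀ y:ℝ, -y^2 = -1*y^2 by intro y; ring]
    rw [integral_gaussian, div_one]
    exact div_self (by positivity)
  calc ∫ y : ℝ, ((Real.exp (-y^2) / Real.sqrt Real.pi : ℝ) : ℂ)
      = ((∫ y : ℝ, Real.exp (-y^2) / Real.sqrt Real.pi : ℝ) : ℂ) := integral_ofReal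
    _ = 1 := by rw [h]; norm_num

theorem gaussFT' (a : ℝ) : ∫ y : ℝ, ((Real.exp (-y^2) / Real.sqrt Real.pi : ℝ) : ℂ)
    * Complex.exp (Complex.I * a * y) = Real.exp (-a^2/4) := by
  have h := fourierIntegral_gaussian (b := 1) (by norm_num) (a : ℂ)
  have hsq : ((Real.pi : ℂ)/1)^(1/2 : ℂ) = (Real.sqrt Real.pi : ℂ) := by
    rw [div_one, Real.sqrt_eq_rpow, Complex.ofReal_cpow Real.pi_nonneg]
    norm_num
  rw [hsq] at h
  have hne : (Real.sqrt Real.pi : ℂ) ≠ 0 := by norm_cast; positivity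
  have key : ∫ y : ℝ, ((Real.exp (-y^2) / Real.sqrt Real.pi : ℝ) : ℂ) * Complex.exp (Complex.I * a * y)
      = (Real.sqrt Real.pi : ℂ)⁻¹ * ∫ x : ℝ, Complex.exp (Complex.I * a * x) * Complex.exp (-1 * x^2) := by
    rw [← MeasureTheory.integral_const_mul]
    congr 1; ext y
    have : ((-1 : ℂ)) * (y:ℂ)^2 = ((-y^2 : ℝ) : ℂ) := by push_cast; ring
    rw [this, ← Complex.ofReal_exp]
    push_cast
    field_simp
  rw [key, h, ← mul_assoc, inv_mul_cancel₀ hne, one_mul,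
    show (-(a:ℂ)^2/(4*1)) = ((-a^2/4 : ℝ) : ℂ) by push_cast; ring, Complex.ofReal_exp]

theorem gaussInt' : Integrable (fun y : ℝ => ((Real.exp (-y^2) / Real.sqrt Real.pi : ℝ) : ℂ)) := by
  rw [show (fun y : ℝ => ((Real.exp (-y^2) / Real.sqrt Real.pi : ℝ) : ℂ))
      = fun y : ℝ => ((Real.exp (-1*y^2) / Real.sqrt Real.pi : ℝ) : ℂ) by ext y; norm_num]
  exact ((integrable_exp_neg_mul_sq one_pos).div_const _).ofReal

theorem gaussExpInt' (a : ℝ) : Integrable (fun y : ℝ =>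
    ((Real.exp (-y^2) / Real.sqrt Real.pi : ℝ) : ℂ) * Complex.exp (Complex.I * a * y)) := by
  have hm : AEStronglyMeasurable (fun y : ℝ => Complex.exp (Complex.I * a * y)) volume :=
    (Complex.continuous_exp.comp (by continuity)).aestronglyMeasurable
  have hb : ∃ C, ∀ y : ℝ, ‖Complex.exp (Complex.I * a * y)‖ ≤ C := by
    refine ⟨1, fun y => ?_⟩
    rw [show Complex.I * (a:ℂ) * y = ((a*y : ℝ):ℂ) * Complex.I by push_cast; ring]
    simp [Complex.norm_exp]
  exact (gaussInt'.bdd_mul hm (Filter.Eventually.of_forall hb.choose_spec)).congr (Filter.Eventually.of_forall fun y => mul_comm _ _)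

theorem tauInt' (T0 ω : ℝ) (hω : ω ≠ 0) :
    ∫ τ in (0:ℝ)..T0, ((2*(Real.cos (ω*τ) - 1) : ℝ) : ℂ)
      = ((2*(Real.sin (ω*T0)/ω - T0) : ℝ) : ℂ) := by
  rw [intervalIntegral.integral_ofReal]
  norm_cast
  have h1 : ∫ τ in (0:ℝ)..T0, Real.cos (ω*τ) = Real.sin (ω*T0)/ω := by
    rw [intervalIntegral.integral_comp_mul_left Real.cos hω]
    simp [integral_cos, div_eq_inv_mul]
  have h2 : (fun τ => 2*(Real.cos (ω*τ) - 1)) = fun τ => 2*Real.cos (ω*τ) - 2 := by ext τ; ring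
  have hI : IntervalIntegrable (fun τ => 2*Real.cos (ω*τ)) volume 0 T0 :=
    (by continuity : Continuous fun τ : ℝ => 2*Real.cos (ω*τ)).intervalIntegrable 0 T0
  rw [h2, intervalIntegral.integral_sub hI intervalIntegrable_const,
    intervalIntegral.integral_const_mul, h1]
  simp; ring

theorem planeWave' (k ω x t s : ℝ) :
    (fun (x t : ℝ) => Complex.exp (Complex.I * ((k : ℂ) * (x : ℂ) - (ω : ℂ) * (t : ℂ)))) x (t - s)
      - 2 * (fun (x t : ℝ) => Complex.exp (Complex.I * ((k : ℂ) * (x : ℂ) - (ω : ℂ) * (t : ℂ)))) x t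
      + (fun (x t : ℝ) => Complex.exp (Complex.I * ((k : ℂ) * (x : ℂ) - (ω : ℂ) * (t : ℂ)))) x (t + s)
      = ((2*(Real.cos (ω*s) - 1) : ℝ) : ℂ) *
        (fun (x t : ℝ) => Complex.exp (Complex.I * ((k : ℂ) * (x : ℂ) - (ω : ℂ) * (t : ℂ)))) x t := by
  simp only
  rw [show Complex.I * ((k:ℂ)*x - ω*((t:ℝ)-s : ℝ)) = Complex.I*((k:ℂ)*x - (ω:ℂ)*t) + ((ω:ℂ)*(s:ℂ))*Complex.I by push_cast; ring,
      show Complex.I * ((k:ℂ)*x - ω*((t:ℝ)+s : ℝ)) = Complex.I*((k:ℂ)*x - (ω:ℂ)*t) + (-((ω:ℂ)*(s:ℂ)))*Complex.I by push_cast; ring,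
      Complex.exp_add, Complex.exp_add]
  have h2 := Complex.two_cos (x := (ω:ℂ)*(s:ℂ))
  push_cast
  linear_combination (-1 : ℂ) * Complex.exp (Complex.I*((k:ℂ)*x-(ω:ℂ)*t)) * h2

theorem planeShift' (k ω x x' t : ℝ) :
    (fun (x t : ℝ) => Complex.exp (Complex.I * ((k : ℂ) * (x : ℂ) - (ω : ℂ) * (t : ℂ)))) x' t
      = Complex.exp (Complex.I * (k:ℂ) * ((x':ℂ) - (x:ℂ))) *
        (fun (x t : ℝ) => Complex.exp (Complex.I * ((k : ℂ) * (x : ℂ) - (ω : ℂ) * (t : ℂ)))) x t := by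
  simp only [← Complex.exp_add]
  congr 1; ring

end Helpers

/-- Dispersion relation of the space-time nonlocal model with Gaussian spatial kernels and
constant temporal kernel `K ≡ 1` on `[0, T₀]`: the plane wave `exp(i(kx − ωt))` (with `ω ≠ 0`)
solves the nonlocal equation iff
`2(cos(ωT₀) − 1) + 2c₁(1 − e^{−k²/4})(sin(ωT₀)/ω − T₀) + c₂(1 − e^{−k²/4}) = 0`. -/


theorem stmt_13 (T0 c1 c2 : ℝ) (hT0 : 0 < T0)
    (C1 C2 : ℝ → ℝ)
    (hC1 : C1 = fun y => c1 * Real.exp (-y ^ 2) / Real.sqrt Real.pi)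
    (hC2 : C2 = fun y => c2 * Real.exp (-y ^ 2) / Real.sqrt Real.pi)
    (K : ℝ → ℝ) (hK : K = fun _ => 1)
    (k ω : ℝ) (hω : ω ≠ 0) (u : ℝ → ℝ → ℂ)
    (hu : u = fun (x t : ℝ) => Complex.exp (Complex.I * ((k : ℂ) * (x : ℂ) - (ω : ℂ) * (t : ℂ)))) :
    (∀ x t : ℝ,
      (u x (t - T0) - 2 * u x t + u x (t + T0))
        + (∫ x' : ℝ, ∫ τ in (0:ℝ)..T0, (C1 (x - x') : ℂ) * (K τ : ℂ) *
            (u x (t - τ) - 2 * u x t + u x (t + τ)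
              - u x' (t - τ) + 2 * u x' t - u x' (t + τ)))
        = ∫ x' : ℝ, (C2 (x - x') : ℂ) * (u x' t - u x t))
      ↔ 2 * (Real.cos (ω * T0) - 1)
          + 2 * c1 * (1 - Real.exp (-k ^ 2 / 4)) * (Real.sin (ω * T0) / ω - T0)
          + c2 * (1 - Real.exp (-k ^ 2 / 4)) = 0 := by
  subst hC1 hC2 hK hu
  set v : ℝ → ℝ → ℂ := fun (x t : ℝ) =>
    Complex.exp (Complex.I * ((k : ℂ) * (x : ℂ) - (ω : ℂ) * (t : ℂ))) with hv
  set E : ℝ := Real.exp (-k ^ 2 / 4) with hE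
  set A : ℝ := 2*(Real.sin (ω*T0)/ω - T0) with hA
  set D : ℝ := 2*(Real.cos (ω*T0) - 1) with hD
  have hv0 : ∀ x t : ℝ, v x t ≠ 0 := fun x t => Complex.exp_ne_zero _
  -- inner τ-integral
  have inner : ∀ x t x' : ℝ,
      (∫ τ in (0:ℝ)..T0, ((c1 * Real.exp (-(x - x') ^ 2) / Real.sqrt Real.pi : ℝ) : ℂ) * ((1:ℝ) : ℂ) *
            (v x (t - τ) - 2 * v x t + v x (t + τ)
              - v x' (t - τ) + 2 * v x' t - v x' (t + τ)))
        = ((c1 * Real.exp (-(x - x') ^ 2) / Real.sqrt Real.pi : ℝ) : ℂ) * (v x t - v x' t) * ((A:ℝ):ℂ) := by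
    intro x t x'
    have step : (∫ τ in (0:ℝ)..T0, ((c1 * Real.exp (-(x - x') ^ 2) / Real.sqrt Real.pi : ℝ) : ℂ) * ((1:ℝ) : ℂ) *
            (v x (t - τ) - 2 * v x t + v x (t + τ)
              - v x' (t - τ) + 2 * v x' t - v x' (t + τ)))
        = ∫ τ in (0:ℝ)..T0, (((c1 * Real.exp (-(x - x') ^ 2) / Real.sqrt Real.pi : ℝ) : ℂ) * (v x t - v x' t)) *
            ((2*(Real.cos (ω*τ) - 1) : ℝ) : ℂ) := by
      apply intervalIntegral.integral_congr
      intro τ _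
      have h1 : v x (t - τ) - 2 * v x t + v x (t + τ)
          = ((2*(Real.cos (ω*τ) - 1) : ℝ) : ℂ) * v x t := planeWave' k ω x t τ
      have h2 : v x' (t - τ) - 2 * v x' t + v x' (t + τ)
          = ((2*(Real.cos (ω*τ) - 1) : ℝ) : ℂ) * v x' t := planeWave' k ω x' t τ
      simp only [Complex.ofReal_one, mul_one]
      linear_combination ((c1 * Real.exp (-(x - x') ^ 2) / Real.sqrt Real.pi : ℝ) : ℂ) * (h1 - h2)
    rw [step, intervalIntegral.integral_const_mul, tauInt' T0 ω hω]
  -- outer integral of the C1 part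
  have outer1 : ∀ x t : ℝ,
      (∫ x' : ℝ, ((c1 * Real.exp (-(x - x') ^ 2) / Real.sqrt Real.pi : ℝ) : ℂ) * (v x t - v x' t) * ((A:ℝ):ℂ))
        = ((c1:ℂ) * (v x t * (A:ℂ))) * (1 - (E:ℂ)) := by
    intro x t
    set F : ℝ → ℂ := fun y : ℝ => ((c1:ℂ) * (v x t * (A:ℂ))) *
        (((Real.exp (-y^2) / Real.sqrt Real.pi : ℝ) : ℂ)
          - ((Real.exp (-y^2) / Real.sqrt Real.pi : ℝ) : ℂ) * Complex.exp (Complex.I * (k:ℂ) * (y:ℂ))) with hF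
    have step1 : (∫ x' : ℝ, ((c1 * Real.exp (-(x - x') ^ 2) / Real.sqrt Real.pi : ℝ) : ℂ) * (v x t - v x' t) * ((A:ℝ):ℂ))
        = ∫ x' : ℝ, F (x' - x) := by
      congr 1; funext x'
      have hs : v x' t = Complex.exp (Complex.I * (k:ℂ) * ((x':ℂ) - (x:ℂ))) * v x t := planeShift' k ω x x' t
      rw [hF]
      simp only
      rw [hs, show ((x' - x : ℝ) : ℂ) = (x' : ℂ) - (x : ℂ) by push_cast; ring,
        show (-(x - x')^2 : ℝ) = (-(x' - x)^2 : ℝ) by ring]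
      push_cast
      ring
    rw [step1, integral_sub_right_eq_self F x, hF]
    rw [MeasureTheory.integral_const_mul,
      MeasureTheory.integral_sub gaussInt' (gaussExpInt' k), gaussMass', gaussFT' k]
  -- outer integral of the C2 part
  have outer2 : ∀ x t : ℝ,
      (∫ x' : ℝ, ((c2 * Real.exp (-(x - x') ^ 2) / Real.sqrt Real.pi : ℝ) : ℂ) * (v x' t - v x t))
        = ((c2:ℂ) * v x t) * ((E:ℂ) - 1) := by
    intro x t
    set F : ℝ → ℂ := fun y : ℝ => ((c2:ℂ) * v x t) *
        (((Real.exp (-y^2) / Real.sqrt Real.pi : ℝ) : ℂ) * Complex.exp (Complex.I * (k:ℂ) * (y:ℂ))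
          - ((Real.exp (-y^2) / Real.sqrt Real.pi : ℝ) : ℂ)) with hF
    have step1 : (∫ x' : ℝ, ((c2 * Real.exp (-(x - x') ^ 2) / Real.sqrt Real.pi : ℝ) : ℂ) * (v x' t - v x t))
        = ∫ x' : ℝ, F (x' - x) := by
      congr 1; funext x'
      have hs : v x' t = Complex.exp (Complex.I * (k:ℂ) * ((x':ℂ) - (x:ℂ))) * v x t := planeShift' k ω x x' t
      rw [hF]
      simp only
      rw [hs, show ((x' - x : ℝ) : ℂ) = (x' : ℂ) - (x : ℂ) by push_cast; ring,
        show (-(x - x')^2 : ℝ) = (-(x' - x)^2 : ℝ) by ring]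
      push_cast
      ring
    rw [step1, integral_sub_right_eq_self F x, hF]
    rw [MeasureTheory.integral_const_mul,
      MeasureTheory.integral_sub (gaussExpInt' k) gaussInt', gaussMass', gaussFT' k]
  -- main per-point identity
  have main : ∀ x t : ℝ,
      ((v x (t - T0) - 2 * v x t + v x (t + T0))
        + (∫ x' : ℝ, ∫ τ in (0:ℝ)..T0,
            ((c1 * Real.exp (-(x - x') ^ 2) / Real.sqrt Real.pi : ℝ) : ℂ) * ((1:ℝ) : ℂ) *
            (v x (t - τ) - 2 * v x t + v x (t + τ)
              - v x' (t - τ) + 2 * v x' t - v x' (t + τ)))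
        = ∫ x' : ℝ, ((c2 * Real.exp (-(x - x') ^ 2) / Real.sqrt Real.pi : ℝ) : ℂ) * (v x' t - v x t))
      ↔ v x t * (((D:ℝ):ℂ) + (c1:ℂ) * (A:ℂ) * (1 - (E:ℂ))) = v x t * ((c2:ℂ) * ((E:ℂ) - 1)) := by
    intro x t
    have hpw : v x (t - T0) - 2 * v x t + v x (t + T0)
        = ((2*(Real.cos (ω*T0) - 1) : ℝ) : ℂ) * v x t := planeWave' k ω x t T0
    have hiter : (∫ x' : ℝ, ∫ τ in (0:ℝ)..T0,
            ((c1 * Real.exp (-(x - x') ^ 2) / Real.sqrt Real.pi : ℝ) : ℂ) * ((1:ℝ) : ℂ) *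
            (v x (t - τ) - 2 * v x t + v x (t + τ)
              - v x' (t - τ) + 2 * v x' t - v x' (t + τ)))
        = ∫ x' : ℝ, ((c1 * Real.exp (-(x - x') ^ 2) / Real.sqrt Real.pi : ℝ) : ℂ) * (v x t - v x' t) * ((A:ℝ):ℂ) := by
      congr 1; funext x'; exact inner x t x'
    rw [hiter, outer1 x t, outer2 x t, hpw]
    constructor <;> intro h <;> linear_combination h
  constructor
  · intro h
    have h0 := (main 0 0).mp (h 0 0)
    have hc := mul_left_cancel₀ (hv0 0 0) h0
    have hcast : ((D + c1*A*(1-E) : ℝ) : ℂ) = ((c2*(E-1) : ℝ) : ℂ) := by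
      push_cast; linear_combination hc
    rw [Complex.ofReal_inj] at hcast
    linear_combination hcast - hD - c1*(1-E)*hA
  · intro h x t
    refine (main x t).mpr ?_
    have hre : (D + c1*A*(1-E) : ℝ) = (c2*(E-1) : ℝ) := by
      linear_combination h + hD + c1*(1-E)*hA
    have hcast : ((D + c1*A*(1-E) : ℝ) : ℂ) = ((c2*(E-1) : ℝ) : ℂ) := by exact_mod_cast hre
    push_cast at hcast
    linear_combination v x t * hcast
end
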